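/- In R = MvPowerSeries (Fin m) ℚ, the power series Td′ · (Σ_{r=0}^m (−1)^r · ch_r) agrees in total degree m with (m/2) · e_m. -/

import Mathlib

open Finset

noncomputable section

/-- The element of `MvPowerSeries (Fin m) ℚ` obtained by substituting the variable `X j`
into a one-variable formal power series `f`. -/
def substAt {m : ℕ} (j : Fin m) (f : PowerSeries ℚ) : MvPowerSeries (Fin m) ℚ :=
  fun n => if n.support ⊆ {j} then PowerSeries.coeff (R := ℚ) (n j) f else 0

/-- The one-variable power series `exp (−X) = Σ_{n ≥ 0} (−X)^n / n!`. -/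
def expNeg : PowerSeries ℚ := PowerSeries.mk fun n => (-1) ^ n / n.factorial

/-- `ch m r = Σ_{S ⊆ Fin m, |S| = r} ∏_{j ∈ S} exp (−X j)`, the `r`-th Chern character
term of the exterior powers, written in Chern roots. -/
def ch (m : ℕ) (r : ℕ) : MvPowerSeries (Fin m) ℚ :=
  ∑ S ∈ Finset.powersetCard r (Finset.univ : Finset (Fin m)),
    ∏ j ∈ S, substAt j expNeg

/-- `esymm m k = Σ_{S ⊆ Fin m, |S| = k} ∏_{j ∈ S} X j`, the `k`-th elementary symmetric
polynomial of the variables, as a multivariate power series. -/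
def esymm (m : ℕ) (k : ℕ) : MvPowerSeries (Fin m) ℚ :=
  ∑ S ∈ Finset.powersetCard k (Finset.univ : Finset (Fin m)),
    ∏ j ∈ S, MvPowerSeries.X j

/-- The Todd class `Td = ∏_{j=1}^m φ(X_j)` written in Chern roots, where `φ` is the
Todd series `X/(1 − e^{−X})`. -/
def Td (m : ℕ) (φ : PowerSeries ℚ) : MvPowerSeries (Fin m) ℚ :=
  ∏ j : Fin m, substAt j φ

/-- `Td′ = Σ_{j=1}^m φ′(X_j) · ∏_{k ≠ j} φ(X_k)`, the class
`Td′(A) = ∂/∂t Td(A + t·Id)|_{t=0}` written in Chern roots. -/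
def Td' (m : ℕ) (φ : PowerSeries ℚ) : MvPowerSeries (Fin m) ℚ :=
  ∑ j : Fin m, substAt j (PowerSeries.derivative (R := ℚ) φ) *
    ∏ k ∈ Finset.univ.erase j, substAt k φ

/-- Two multivariate power series agree in total degree `≤ p`: their coefficients at every
multi-exponent of total degree `≤ p` coincide. -/
def AgreeUpTo (m p : ℕ) (F G : MvPowerSeries (Fin m) ℚ) : Prop :=
  ∀ n : Fin m →₀ ℕ, (∑ j, n j) ≤ p → MvPowerSeries.coeff (R := ℚ) n F = MvPowerSeries.coeff (R := ℚ) n G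

/-- Two multivariate power series agree in total degree `p`: their coefficients at every
multi-exponent of total degree `p` coincide. -/
def AgreeAt (m p : ℕ) (F G : MvPowerSeries (Fin m) ℚ) : Prop :=
  ∀ n : Fin m →₀ ℕ, (∑ j, n j) = p → MvPowerSeries.coeff (R := ℚ) n F = MvPowerSeries.coeff (R := ℚ) n G

/-! The alternating sum of the `ch r` is `∏ⱼ (1 − e^{−X_j})`. Multiplying the `j`-th
summand of `Td′` by it turns every factor `φ(X_k)(1 − e^{−X_k})` into `X_k`, and
`φ′(X_j)(1 − e^{−X_j})` into `X_j ψ(X_j)` with `ψ(0) = φ′(0) = 1/2`. So the product is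
`(Σⱼ ψ(X_j)) · X_1⋯X_m`, whose only monomial of total degree `m` is `X_1⋯X_m`, with coefficient
`m ψ(0) = m/2`. -/

lemma Finsupp.eq_of_le_of_degree_eq {σ : Type*} {e n : σ →₀ ℕ} (hle : e ≤ n)
    (h : n.degree = e.degree) : n = e := by
  have hsub : (n - e).degree = 0 := by
    have := map_add Finsupp.degree (n - e) e
    rw [tsub_add_cancel_of_le hle, h] at this
    omega
  rw [Finsupp.degree_eq_zero_iff, tsub_eq_zero_iff_le] at hsub
  exact le_antisymm hsub hle

lemma MvPowerSeries.coeff_mul_monomial_of_degree_eq {σ R : Type*} [CommSemiring R]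
    [DecidableEq σ] (F : MvPowerSeries σ R) {n e : σ →₀ ℕ} (a : R) (h : n.degree = e.degree) :
    coeff n (F * monomial e a) = if n = e then constantCoeff F * a else 0 := by
  rw [coeff_mul_monomial]
  by_cases hn : n = e
  · simp [hn]
  · rw [if_neg hn, if_neg fun hle => hn (Finsupp.eq_of_le_of_degree_eq hle h)]

lemma MvPowerSeries.prod_X_eq_monomial {σ R : Type*} [CommSemiring R] [Fintype σ] :
    ∏ i, (X i : MvPowerSeries σ R) = monomial (∑ i, Finsupp.single i 1) 1 := by
  simp_rw [X_def, prod_monomial, prod_const_one]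

lemma Finset.prod_one_sub_eq_sum_powersetCard {ι R : Type*} [Fintype ι] [CommRing R]
    (f : ι → R) :
    ∏ i, (1 - f i) = ∑ r ∈ range (Fintype.card ι + 1),
      (-1) ^ r * ∑ t ∈ powersetCard r univ, ∏ i ∈ t, f i := by
  simp_rw [sub_eq_add_neg, prod_one_add, sum_powerset, card_univ, mul_sum]
  refine sum_congr rfl fun r _ => sum_congr rfl fun t ht => ?_
  rw [prod_neg, (mem_powersetCard.1 ht).2]

section substAt

variable {m : ℕ} (j : Fin m)

lemma substAt_eq_subst (f : PowerSeries ℚ) :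
    substAt j f = PowerSeries.subst (MvPowerSeries.X j) f := by
  ext n
  rw [PowerSeries.coeff_subst_single]
  exact if_congr Finsupp.support_subset_singleton rfl rfl

lemma substAt_mul (f g : PowerSeries ℚ) : substAt j (f * g) = substAt j f * substAt j g := by
  simp only [substAt_eq_subst, PowerSeries.subst_mul (PowerSeries.HasSubst.X j)]

lemma substAt_one_sub (f : PowerSeries ℚ) : substAt j (1 - f) = 1 - substAt j f := by
  simp only [substAt_eq_subst, ← PowerSeries.coe_substAlgHom (PowerSeries.HasSubst.X j),
    map_sub, map_one]

lemma substAt_X : substAt j PowerSeries.X = MvPowerSeries.X j := by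
  rw [substAt_eq_subst, PowerSeries.subst_X (PowerSeries.HasSubst.X j)]

lemma constantCoeff_substAt (f : PowerSeries ℚ) :
    MvPowerSeries.constantCoeff (substAt j f) = PowerSeries.constantCoeff f := by
  rw [← MvPowerSeries.coeff_zero_eq_constantCoeff_apply,
    ← PowerSeries.coeff_zero_eq_constantCoeff_apply, substAt_eq_subst,
    PowerSeries.coeff_subst_single]
  simp

end substAt

lemma coeff_expNeg (n : ℕ) :
    PowerSeries.coeff n expNeg = (-1) ^ n / n.factorial := PowerSeries.coeff_mk n _

lemma constantCoeff_one_sub_expNeg : PowerSeries.constantCoeff (1 - expNeg) = 0 := by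
  rw [map_sub, map_one, ← PowerSeries.coeff_zero_eq_constantCoeff_apply, coeff_expNeg]
  norm_num

lemma coeff_one_of_mul_one_sub_expNeg_eq_X {φ : PowerSeries ℚ}
    (hφ : φ * (1 - expNeg) = PowerSeries.X) : PowerSeries.coeff 1 φ = 1 / 2 := by
  have h1 := congrArg (PowerSeries.coeff 1) hφ
  have h2 := congrArg (PowerSeries.coeff 2) hφ
  simp [PowerSeries.coeff_mul, Finset.Nat.sum_antidiagonal_eq_sum_range_succ_mk,
    Finset.sum_range_succ, coeff_expNeg, PowerSeries.coeff_one, PowerSeries.coeff_X] at h1 h2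
  linarith

lemma exists_derivative_mul_one_sub_expNeg_eq_X_mul {φ : PowerSeries ℚ}
    (hφ : φ * (1 - expNeg) = PowerSeries.X) :
    ∃ ψ, PowerSeries.derivative ℚ φ * (1 - expNeg) = PowerSeries.X * ψ ∧
      PowerSeries.constantCoeff ψ = 1 / 2 := by
  obtain ⟨u, hu⟩ := PowerSeries.X_dvd_iff.mpr constantCoeff_one_sub_expNeg
  refine ⟨PowerSeries.derivative ℚ φ * u, by rw [hu]; ring, ?_⟩
  have hu0 : PowerSeries.constantCoeff u = 1 := by
    have := congrArg (PowerSeries.coeff 1) hu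
    simpa [coeff_expNeg, PowerSeries.coeff_one] using this.symm
  rw [map_mul, hu0, mul_one, ← PowerSeries.coeff_zero_eq_constantCoeff_apply,
    PowerSeries.coeff_derivative, coeff_one_of_mul_one_sub_expNeg_eq_X hφ]
  norm_num

lemma alternating_sum_ch_eq_prod (m : ℕ) :
    ∑ r ∈ range (m + 1), (-1 : MvPowerSeries (Fin m) ℚ) ^ r * ch m r =
      ∏ j, (1 - substAt j expNeg) := by
  rw [prod_one_sub_eq_sum_powersetCard, Fintype.card_fin]
  rfl

lemma esymm_self (m : ℕ) : esymm m m = ∏ j : Fin m, MvPowerSeries.X j := by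
  have hsubsets : powersetCard m (univ : Finset (Fin m)) = {univ} := by
    simpa using powersetCard_self (univ : Finset (Fin m))
  rw [esymm, hsubsets, sum_singleton]

lemma Td'_mul_prod_one_sub_expNeg {m : ℕ} {φ ψ : PowerSeries ℚ}
    (hφ : φ * (1 - expNeg) = PowerSeries.X)
    (hψ : PowerSeries.derivative ℚ φ * (1 - expNeg) = PowerSeries.X * ψ) :
    Td' m φ * ∏ k, (1 - substAt k expNeg) = (∑ j, substAt j ψ) * ∏ k, MvPowerSeries.X k := by
  have hfactor (k : Fin m) (f : PowerSeries ℚ) :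
      substAt k f * (1 - substAt k expNeg) = substAt k (f * (1 - expNeg)) := by
    rw [substAt_mul, substAt_one_sub]
  rw [Td', sum_mul, sum_mul]
  refine sum_congr rfl fun j _ => ?_
  rw [← mul_prod_erase univ _ (mem_univ j), mul_mul_mul_comm, ← prod_mul_distrib, hfactor, hψ,
    ← mul_prod_erase univ _ (mem_univ j), substAt_mul, substAt_X]
  simp_rw [hfactor, hφ, substAt_X]
  ring

/-- `Td′ · (Σ_{r=0}^m (−1)^r · ch_r)` agrees in total degree `m` with `(m/2) · e_m`. -/
theorem td'_mul_alternating_sum_ch (m : ℕ) (φ : PowerSeries ℚ)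
    (hφ : φ * (1 - expNeg) = PowerSeries.X) :
    AgreeAt m m
      (Td' m φ * ∑ r ∈ Finset.range (m + 1),
        (-1 : MvPowerSeries (Fin m) ℚ) ^ r * ch m r)
      (MvPowerSeries.C (σ := Fin m) (R := ℚ) ((m : ℚ) / 2) * esymm m m) := by
  obtain ⟨ψ, hψ, hψ0⟩ := exists_derivative_mul_one_sub_expNeg_eq_X_mul hφ
  intro n hn
  have hdeg : n.degree = (∑ j : Fin m, Finsupp.single j 1).degree := by
    simp [Finsupp.degree_eq_sum n, hn, map_sum]
  rw [alternating_sum_ch_eq_prod, Td'_mul_prod_one_sub_expNeg hφ hψ, esymm_self,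
    MvPowerSeries.prod_X_eq_monomial, MvPowerSeries.coeff_mul_monomial_of_degree_eq _ _ hdeg,
    MvPowerSeries.coeff_C_mul, MvPowerSeries.coeff_monomial]
  split_ifs
  · simp only [mul_one, map_sum, constantCoeff_substAt, hψ0, sum_const, card_univ,
      Fintype.card_fin, nsmul_eq_mul]
    ring
  · simp
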